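/- Let δ, k, n be integers with δ ≥ 1, 0 ≤ k < δ, and n > 2δ−k+1. Then q(H(n,δ,k)) is equal to the largest real root of g(x) = 0, where g(x) = x³ − (3n−δ+2k−6)x² + (2n² + (δ+2k−8)n − 4δ² + 4(k−1)δ − 4k + 8)x − 2δ³ + (4n+4k−10)δ² − (2n² + (4k−10)n + 2k² − 10k + 12)δ and H(n,δ,k) = K_δ ∨ ((δ−k+1)K_1 ∪ K_{n−2δ+k−1}). -/

import Mathlib

/-- Adjacency matrix over ℝ (with classical decidability of adjacency). -/
noncomputable def adjMat {V : Type*} [Fintype V] [DecidableEq V] (G : SimpleGraph V) :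
    Matrix V V ℝ :=
  letI := Classical.decRel G.Adj
  G.adjMatrix ℝ

/-- Degree diagonal matrix over ℝ. -/
noncomputable def degMat {V : Type*} [Fintype V] [DecidableEq V] (G : SimpleGraph V) :
    Matrix V V ℝ :=
  letI := Classical.decRel G.Adj
  Matrix.diagonal fun v => (G.degree v : ℝ)

/-- The spectral radius of a graph: the largest eigenvalue of its adjacency matrix. -/
noncomputable def grho {V : Type*} [Fintype V] [DecidableEq V] (G : SimpleGraph V) : ℝ :=
  sSup (spectrum ℝ (adjMat G))

/-- The signless Laplacian spectral radius of a graph: the largest eigenvalue of D(G) + A(G). -/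
noncomputable def gq {V : Type*} [Fintype V] [DecidableEq V] (G : SimpleGraph V) : ℝ :=
  sSup (spectrum ℝ (degMat G + adjMat G))

/-- The graph `K_s ∨ (m K_r ∪ K_{n - s - m*r})` on `Fin n`:
vertices `< s` form the out clique joined to everything, the next `m*r` vertices form
`m` disjoint copies of `K_r`, and the remaining vertices form a clique. -/
def Hgen (n s m r : ℕ) : SimpleGraph (Fin n) where
  Adj u v := u ≠ v ∧ ((u : ℕ) < s ∨ (v : ℕ) < s ∨
    (s + m * r ≤ (u : ℕ) ∧ s + m * r ≤ (v : ℕ)) ∨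
    (s ≤ (u : ℕ) ∧ s ≤ (v : ℕ) ∧ (u : ℕ) < s + m * r ∧ (v : ℕ) < s + m * r ∧
      ((u : ℕ) - s) / r = ((v : ℕ) - s) / r))
  symm := by
    refine ⟨?_⟩
    rintro u v ⟨h1, h2⟩
    refine ⟨h1.symm, ?_⟩
    rcases h2 with h | h | ⟨h, h'⟩ | ⟨h1', h2', h3', h4', h5'⟩
    · exact Or.inr (Or.inl h)
    · exact Or.inl h
    · exact Or.inr (Or.inr (Or.inl ⟨h', h⟩))
    · exact Or.inr (Or.inr (Or.inr ⟨h2', h1', h4', h3', h5'.symm⟩))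
  loopless := by refine ⟨?_⟩; rintro u ⟨h1, -⟩; exact h1 rfl

/-- `K_δ ∨ ((δ-k+1) K_1 ∪ K_{n-2δ+k-1})`. -/
def Hndk (n δ k : ℕ) : SimpleGraph (Fin n) := Hgen n δ (δ - k + 1) 1

/-- A graph is `k`-factor-critical if deleting any `k` vertices leaves a graph
with a perfect matching. -/
def kFactorCritical {V : Type*} [Fintype V] (G : SimpleGraph V) (k : ℕ) : Prop :=
  ∀ S : Finset V, S.card = k →
    ∃ M : (G.induce ((S : Set V)ᶜ)).Subgraph, M.IsPerfectMatching

/-! Adjacency in `H(n,δ,k)` depends only on which of its three parts (the `K_δ`, the `δ-k+1`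
isolated vertices, the remaining clique) the endpoints lie in, so `Q = D + A` maps vectors
constant on the parts to such vectors through a `3 × 3` quotient matrix `B` with characteristic
polynomial `g`. An eigenvector of `Q` that is not constant on the parts differs on two vertices
`i, j` of one part; these are twins, which forces the eigenvalue to be `deg i - [i ~ j] ≤ n - 2`.
As `g(n - 2) = -2δ(δ-k+1)(δ-k) < 0`, `B` has an eigenvalue above `n - 2`, so the largest
eigenvalue of `Q` is the largest eigenvalue of `B`, i.e. the largest root of `g`. -/

open Finset Matrix Polynomial

theorem Matrix.mem_spectrum_iff_exists_mulVec_eq_smul {ι K : Type*} [Fintype ι] [DecidableEq ι]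
    [Field K] (A : Matrix ι ι K) (μ : K) :
    μ ∈ spectrum K A ↔ ∃ v, v ≠ 0 ∧ A *ᵥ v = μ • v := by
  rw [← spectrum_toLin', ← Module.End.hasEigenvalue_iff_mem_spectrum]
  constructor
  · intro h
    obtain ⟨v, hv⟩ := h.exists_hasEigenvector
    exact ⟨v, hv.2, Module.End.mem_eigenspace_iff.mp hv.1⟩
  · rintro ⟨v, hv0, hv⟩
    exact Module.End.hasEigenvalue_of_hasEigenvector ⟨Module.End.mem_eigenspace_iff.mpr hv, hv0⟩

theorem Matrix.exists_mem_spectrum_gt_of_det_neg {ι : Type*} [Fintype ι] [DecidableEq ι]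
    [Nonempty ι] (A : Matrix ι ι ℝ) {c : ℝ} (h : (scalar ι c - A).det < 0) :
    ∃ r ∈ spectrum ℝ A, c < r := by
  have hdeg : 0 < A.charpoly.degree := by
    rw [degree_eq_natDegree A.charpoly_monic.ne_zero, charpoly_natDegree_eq_dim]
    exact_mod_cast Fintype.card_pos
  obtain ⟨b, hb, hcb⟩ := ((A.charpoly.tendsto_atTop_of_leadingCoeff_nonneg hdeg
    (by rw [A.charpoly_monic.leadingCoeff]; exact zero_le_one)).eventually_ge_atTop 0
    |>.and (Filter.eventually_ge_atTop c)).exists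
  have hc : A.charpoly.eval c < 0 := by rwa [eval_charpoly]
  obtain ⟨r, hr, hroot⟩ := intermediate_value_Icc hcb A.charpoly.continuous.continuousOn
    ⟨hc.le, hb⟩
  refine ⟨r, mem_spectrum_iff_isRoot_charpoly.mpr hroot, hr.1.lt_of_ne ?_⟩
  rintro rfl
  exact hc.ne hroot

theorem isGreatest_csSup_of_subset_union_Iic {S R : Set ℝ} {c : ℝ} (hS : S.Finite)
    (hRS : R ⊆ S) (hSR : S ⊆ R ∪ Set.Iic c) (hR : ∃ r ∈ R, c < r) : IsGreatest R (sSup S) := by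
  obtain ⟨r, hrR, hcr⟩ := hR
  have hle : ∀ x ∈ R, x ≤ sSup S := fun x hx => le_csSup hS.bddAbove (hRS hx)
  refine ⟨?_, hle⟩
  rcases hSR (Set.Nonempty.csSup_mem ⟨r, hRS hrR⟩ hS) with h | h
  · exact h
  · exact absurd (hcr.trans_le (hle r hrR)) (not_lt.mpr h)

namespace SimpleGraph

variable {V : Type*} [Fintype V] [DecidableEq V] {G : SimpleGraph V} [DecidableRel G.Adj]

theorem adjMat_eq : adjMat G = G.adjMatrix ℝ := by
  unfold adjMat; congr!

theorem degMat_eq : degMat G = G.degMatrix ℝ := by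
  unfold degMat degMatrix; congr!

theorem gq_eq : gq G = sSup (spectrum ℝ (G.degMatrix ℝ + G.adjMatrix ℝ)) := by
  rw [gq, degMat_eq, adjMat_eq]

theorem adjMatrix_mulVec_sub_of_twins {i j : V} (hij : i ≠ j)
    (htwin : ∀ l, l ≠ i → l ≠ j → (G.Adj i l ↔ G.Adj j l)) (v : V → ℝ) :
    (G.adjMatrix ℝ *ᵥ v) i - (G.adjMatrix ℝ *ᵥ v) j = if G.Adj i j then v j - v i else 0 := by
  rw [mulVec, mulVec, dotProduct, dotProduct, ← sum_sub_distrib,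
    ← sum_subset (subset_univ {i, j}), sum_pair hij]
  · simp only [adjMatrix_apply, G.adj_comm j i, G.loopless.irrefl, if_false]
    split_ifs <;> ring
  · intro l _ hl
    simp only [mem_insert, mem_singleton, not_or] at hl
    simp [adjMatrix_apply, htwin l hl.1 hl.2]

theorem degree_eq_of_twins {i j : V} (hij : i ≠ j)
    (htwin : ∀ l, l ≠ i → l ≠ j → (G.Adj i l ↔ G.Adj j l)) : G.degree i = G.degree j := by
  have h := adjMatrix_mulVec_sub_of_twins hij htwin (Function.const V 1)
  simp only [adjMatrix_mulVec_const_apply, Function.const_apply, mul_one, sub_self, ite_self,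
    sub_eq_zero] at h
  exact_mod_cast h

theorem eq_degree_sub_of_twins {i j : V} (hij : i ≠ j)
    (htwin : ∀ l, l ≠ i → l ≠ j → (G.Adj i l ↔ G.Adj j l)) {v : V → ℝ} {μ : ℝ}
    (hv : (G.degMatrix ℝ + G.adjMatrix ℝ) *ᵥ v = μ • v)
    (hvij : v i ≠ v j) : μ = G.degree i - if G.Adj i j then 1 else 0 := by
  have hdiff := adjMatrix_mulVec_sub_of_twins hij htwin v
  have hi := congrFun hv i
  have hj := congrFun hv j
  simp only [add_mulVec, degMatrix_mulVec_apply, Pi.add_apply, Pi.smul_apply, smul_eq_mul,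
    degree_eq_of_twins hij htwin] at hi hj
  have hfac : (μ - (G.degree j - if G.Adj i j then 1 else 0)) * (v i - v j) = 0 := by
    split_ifs at hdiff ⊢ <;> linear_combination hj - hi + hdiff
  rw [degree_eq_of_twins hij htwin]
  exact sub_eq_zero.mp ((mul_eq_zero.mp hfac).resolve_right (sub_ne_zero.mpr hvij))

theorem degree_sub_ite_adj_le {i j : V} (hij : i ≠ j) :
    (G.degree i : ℝ) - (if G.Adj i j then 1 else 0) ≤ Fintype.card V - 2 := by
  split_ifs with hadj
  · have : (G.degree i : ℝ) + 1 ≤ Fintype.card V := by exact_mod_cast G.degree_lt_card_verts i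
    linarith
  · have hsub : G.neighborFinset i ⊆ univ \ {i, j} := fun l hl => by
      have hil := (G.mem_neighborFinset i l).mp hl
      simp only [mem_sdiff, mem_univ, mem_insert, mem_singleton, true_and, not_or]
      exact ⟨(G.ne_of_adj hil).symm, fun h => hadj (h ▸ hil)⟩
    have hdeg := card_le_card hsub
    have hpair := card_le_univ ({i, j} : Finset V)
    rw [card_sdiff_of_subset (subset_univ _), card_pair hij, card_univ,
      card_neighborFinset_eq_degree] at hdeg
    rw [card_pair hij] at hpair
    have : (G.degree i : ℝ) + 2 ≤ Fintype.card V := by exact_mod_cast (by omega : _ + 2 ≤ _)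
    linarith

end SimpleGraph

section Blowup

variable {V ι : Type*} [Fintype V] [Fintype ι] [DecidableEq ι]

theorem Finset.sum_comp_eq_sum_card_mul (cls : V → ι) (f : ι → ℝ) :
    ∑ l, f (cls l) = ∑ c, #{j | cls j = c} * f c := by
  rw [← sum_fiberwise univ cls]
  refine sum_congr rfl fun c _ => ?_
  rw [sum_congr rfl fun l hl => by rw [(mem_filter.mp hl).2], sum_const, nsmul_eq_mul]

def quotientAdj (cls : V → ι) (P : ι → ι → Prop) [DecidableRel P] : Matrix ι ι ℝ :=
  of fun a c => (if P a c then (#{j | cls j = c} : ℝ) else 0) - if a = c ∧ P a a then 1 else 0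

def quotientSignlessLap (cls : V → ι) (P : ι → ι → Prop) [DecidableRel P] : Matrix ι ι ℝ :=
  diagonal (quotientAdj cls P *ᵥ 1) + quotientAdj cls P

variable {P : ι → ι → Prop} [DecidableRel P]

namespace SimpleGraph

variable [DecidableEq V] {cls : V → ι} {G : SimpleGraph V} [DecidableRel G.Adj]

theorem adjMatrix_mulVec_comp (hG : ∀ i j, G.Adj i j ↔ i ≠ j ∧ P (cls i) (cls j))
    (w : ι → ℝ) : G.adjMatrix ℝ *ᵥ (w ∘ cls) = (quotientAdj cls P *ᵥ w) ∘ cls := by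
  funext i
  have hterm : ∀ l, (G.adjMatrix ℝ i l * w (cls l))
      = (if P (cls i) (cls l) then w (cls l) else 0)
        - if i = l then (if P (cls i) (cls i) then w (cls i) else 0) else 0 := by
    intro l
    by_cases h : i = l
    · subst h; simp
    · simp [adjMatrix_apply, hG, h]
  show ∑ l, G.adjMatrix ℝ i l * w (cls l) = ∑ c, quotientAdj cls P (cls i) c * w c
  simp only [hterm, sum_sub_distrib, sum_ite_eq, mem_univ, if_true]
  rw [sum_comp_eq_sum_card_mul cls fun c => if P (cls i) c then w c else 0]
  simp only [quotientAdj, of_apply, sub_mul, sum_sub_distrib, ite_mul, one_mul, zero_mul,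
    mul_ite, mul_zero, ite_and, sum_ite_eq, mem_univ, if_true]

theorem degree_eq_quotientAdj_mulVec_one (hG : ∀ i j, G.Adj i j ↔ i ≠ j ∧ P (cls i) (cls j))
    (i : V) : (G.degree i : ℝ) = (quotientAdj cls P *ᵥ 1) (cls i) := by
  have h := congrFun (adjMatrix_mulVec_comp hG 1) i
  rwa [show (1 : ι → ℝ) ∘ cls = Function.const V 1 from rfl, adjMatrix_mulVec_const_apply,
    mul_one] at h

theorem signlessLap_mulVec_comp (hG : ∀ i j, G.Adj i j ↔ i ≠ j ∧ P (cls i) (cls j))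
    (w : ι → ℝ) :
    (G.degMatrix ℝ + G.adjMatrix ℝ) *ᵥ (w ∘ cls)
      = (quotientSignlessLap cls P *ᵥ w) ∘ cls := by
  funext i
  simp [quotientSignlessLap, add_mulVec, mulVec_diagonal, degMatrix_mulVec_apply,
    adjMatrix_mulVec_comp hG, degree_eq_quotientAdj_mulVec_one hG]

theorem spectrum_quotientSignlessLap_subset
    (hG : ∀ i j, G.Adj i j ↔ i ≠ j ∧ P (cls i) (cls j)) (hcls : Function.Surjective cls) :
    spectrum ℝ (quotientSignlessLap cls P) ⊆ spectrum ℝ (G.degMatrix ℝ + G.adjMatrix ℝ) := by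
  intro μ hμ
  obtain ⟨w, hw0, hw⟩ := (mem_spectrum_iff_exists_mulVec_eq_smul _ μ).mp hμ
  refine (mem_spectrum_iff_exists_mulVec_eq_smul _ μ).mpr ⟨w ∘ cls, ?_, ?_⟩
  · exact fun h => hw0 (hcls.injective_comp_right (h.trans (Pi.zero_comp cls).symm))
  · rw [signlessLap_mulVec_comp hG, hw]
    rfl

theorem spectrum_signlessLap_subset
    (hG : ∀ i j, G.Adj i j ↔ i ≠ j ∧ P (cls i) (cls j)) (hcls : Function.Surjective cls) :
    spectrum ℝ (G.degMatrix ℝ + G.adjMatrix ℝ)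
      ⊆ spectrum ℝ (quotientSignlessLap cls P) ∪ Set.Iic (Fintype.card V - 2 : ℝ) := by
  intro μ hμ
  obtain ⟨v, hv0, hv⟩ := (mem_spectrum_iff_exists_mulVec_eq_smul _ μ).mp hμ
  by_cases hsplit : ∃ i j, cls i = cls j ∧ v i ≠ v j
  · obtain ⟨i, j, hcij, hvij⟩ := hsplit
    have hij : i ≠ j := fun h => hvij (h ▸ rfl)
    have htwin : ∀ l, l ≠ i → l ≠ j → (G.Adj i l ↔ G.Adj j l) := fun l hli hlj => by
      rw [hG, hG, hcij, and_iff_right hli.symm, and_iff_right hlj.symm]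
    right
    rw [Set.mem_Iic, eq_degree_sub_of_twins hij htwin hv hvij]
    exact degree_sub_ite_adj_le hij
  · push Not at hsplit
    set w := v ∘ Function.surjInv hcls
    have hvw : v = w ∘ cls :=
      funext fun i => hsplit _ _ (Function.surjInv_eq hcls (cls i)).symm
    left
    refine (mem_spectrum_iff_exists_mulVec_eq_smul _ μ).mpr ⟨w, ?_, ?_⟩
    · intro hw0
      exact hv0 (by rw [hvw, hw0, Pi.zero_comp])
    · apply hcls.injective_comp_right
      rw [hvw, signlessLap_mulVec_comp hG] at hv
      exact hv

theorem isGreatest_spectrum_quotientSignlessLap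
    (hG : ∀ i j, G.Adj i j ↔ i ≠ j ∧ P (cls i) (cls j)) (hcls : Function.Surjective cls)
    (hbig : ∃ r ∈ spectrum ℝ (quotientSignlessLap cls P), (Fintype.card V - 2 : ℝ) < r) :
    IsGreatest (spectrum ℝ (quotientSignlessLap cls P)) (gq G) := by
  rw [gq_eq]
  exact isGreatest_csSup_of_subset_union_Iic (finite_spectrum _)
    (spectrum_quotientSignlessLap_subset hG hcls) (spectrum_signlessLap_subset hG hcls) hbig

end SimpleGraph

end Blowup

/-- Parts `0`, `1`, `2` of `Hgen n s m 1` are its `K_s`, its `m` isolated vertices and its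
remaining clique. -/
def hgenPart (n s m : ℕ) (i : Fin n) : Fin 3 :=
  if (i : ℕ) < s then 0 else if (i : ℕ) < s + m then 1 else 2

def hgenPattern (a c : Fin 3) : Prop := a = 0 ∨ c = 0 ∨ (a = 2 ∧ c = 2)

instance : DecidableRel hgenPattern := fun a c => by unfold hgenPattern; infer_instance

def hgenQuotient (n s m : ℝ) : Matrix (Fin 3) (Fin 3) ℝ :=
  !![n + s - 2, m, n - s - m; s, s, 0; s, 0, 2 * n - s - 2 * m - 2]

theorem det_scalar_sub_hgenQuotient (n s m x : ℝ) :
    (scalar (Fin 3) x - hgenQuotient n s m).det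
      = (x - (n + s - 2)) * (x - s) * (x - (2 * n - s - 2 * m - 2))
        - m * s * (x - (2 * n - s - 2 * m - 2)) - (n - s - m) * s * (x - s) := by
  simp [hgenQuotient, det_fin_three]
  ring

section Hgen

variable {n s m : ℕ}

theorem Hgen_adj_iff (u v : Fin n) :
    (Hgen n s m 1).Adj u v ↔ u ≠ v ∧ hgenPattern (hgenPart n s m u) (hgenPart n s m v) := by
  simp only [Hgen, hgenPart, hgenPattern, mul_one, Nat.div_one]
  split_ifs <;> simp <;> omega

theorem hgenPart_surjective (hs : 1 ≤ s) (hm : 1 ≤ m) (hn : s + m < n) :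
    Function.Surjective (hgenPart n s m) := by
  intro a
  fin_cases a
  · exact ⟨⟨0, by omega⟩, by simp [hgenPart]; omega⟩
  · exact ⟨⟨s, by omega⟩, by simp [hgenPart]; omega⟩
  · exact ⟨⟨s + m, hn⟩, by simp [hgenPart]⟩

theorem card_hgenPart_eq (hn : s + m ≤ n) :
    #{j | hgenPart n s m j = 0} = s ∧ #{j | hgenPart n s m j = 1} = m ∧
      #{j | hgenPart n s m j = 2} = n - s - m := by
  have hlt : ∀ t ≤ n, #{j : Fin n | (j : ℕ) < t} = t := fun t ht => by
    rw [Fin.card_filter_val_lt, min_eq_right ht]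
  have h0 : #{j | hgenPart n s m j = 0} = s := by
    rw [filter_congr fun j _ => show hgenPart n s m j = 0 ↔ (j : ℕ) < s by
      simp only [hgenPart]; split_ifs <;> simp <;> omega]
    exact hlt s (by omega)
  have h2 : #{j | hgenPart n s m j = 2} = n - s - m := by
    have hsplit := card_filter_add_card_filter_not (s := univ) (fun j : Fin n => (j : ℕ) < s + m)
    rw [hlt _ hn, card_univ, Fintype.card_fin] at hsplit
    rw [filter_congr fun j _ => show hgenPart n s m j = 2 ↔ ¬(j : ℕ) < s + m by
      simp only [hgenPart]; split_ifs <;> simp <;> omega]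
    omega
  have htotal := card_eq_sum_card_fiberwise (s := univ) (t := univ)
    (f := hgenPart n s m) fun _ _ => mem_univ _
  rw [card_univ, Fintype.card_fin, Fin.sum_univ_three, h0, h2] at htotal
  exact ⟨h0, by omega, h2⟩

theorem quotientSignlessLap_hgenPart (hn : s + m ≤ n) :
    quotientSignlessLap (hgenPart n s m) hgenPattern = hgenQuotient n s m := by
  obtain ⟨h0, h1, h2⟩ := card_hgenPart_eq hn
  have hcast : ((n - s - m : ℕ) : ℝ) = n - s - m := by
    rw [Nat.sub_sub, Nat.cast_sub hn, Nat.cast_add]; ring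
  ext a c
  fin_cases a <;> fin_cases c <;>
    simp [quotientSignlessLap, quotientAdj, hgenPattern, hgenQuotient, mulVec, dotProduct,
      Fin.sum_univ_three, h0, h1, h2, hcast] <;> ring

theorem isGreatest_spectrum_hgenQuotient (hs : 1 ≤ s) (hm : 2 ≤ m) (hn : s + m < n) :
    IsGreatest (spectrum ℝ (hgenQuotient n s m)) (gq (Hgen n s m 1)) := by
  classical
  rw [← quotientSignlessLap_hgenPart hn.le]
  refine SimpleGraph.isGreatest_spectrum_quotientSignlessLap Hgen_adj_iff
    (hgenPart_surjective hs (by omega) hn) ?_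
  rw [quotientSignlessLap_hgenPart hn.le, Fintype.card_fin]
  apply exists_mem_spectrum_gt_of_det_neg
  rw [det_scalar_sub_hgenQuotient]
  have hs' : (1 : ℝ) ≤ s := by exact_mod_cast hs
  have hm' : (2 : ℝ) ≤ m := by exact_mod_cast hm
  nlinarith [mul_pos (mul_pos (by linarith : (0 : ℝ) < s) (by linarith : (0 : ℝ) < m))
    (by linarith : (0 : ℝ) < m - 1)]

end Hgen

/-- Lemma 3.2 (signless Laplacian case): `q(H(n,δ,k))` is the largest real root of `g`. -/
theorem stmt_7 (n δ k : ℕ) (hδ : 1 ≤ δ) (hk : k < δ) (hn : (2 * δ : ℤ) - k + 1 < n) :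
    IsGreatest {x : ℝ | x ^ 3 - (3 * (n : ℝ) - (δ : ℝ) + 2 * (k : ℝ) - 6) * x ^ 2 + (2 * (n : ℝ) ^ 2 + ((δ : ℝ) + 2 * (k : ℝ) - 8) * (n : ℝ) - 4 * (δ : ℝ) ^ 2 + 4 * ((k : ℝ) - 1) * (δ : ℝ) - 4 * (k : ℝ) + 8) * x - 2 * (δ : ℝ) ^ 3 + (4 * (n : ℝ) + 4 * (k : ℝ) - 10) * (δ : ℝ) ^ 2 - (2 * (n : ℝ) ^ 2 + (4 * (k : ℝ) - 10) * (n : ℝ) + 2 * (k : ℝ) ^ 2 - 10 * (k : ℝ) + 12) * (δ : ℝ) = 0} (gq (Hndk n δ k)) := by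
  have hm : ((δ - k + 1 : ℕ) : ℝ) = δ - k + 1 := by push_cast [Nat.cast_sub hk.le]; ring
  convert isGreatest_spectrum_hgenQuotient (n := n) (m := δ - k + 1) hδ (by omega) (by omega)
    using 1
  · ext x
    rw [Set.mem_ofPred_eq, mem_spectrum_iff_isRoot_charpoly, IsRoot.def, eval_charpoly,
      det_scalar_sub_hgenQuotient, hm]
    constructor <;> intro h <;> linear_combination h
  · rfl
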